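/- arXiv:2503.22915 — 2 statements merged into one kernel-verified Lean document; each statement's English description precedes it below -/
import Mathlib

section
/- Let d, n ≥ 1 and suppose that for each ξ ∈ ℝ^d with ξ ≠ 0 one is given real n×n matrices A(ξ) symmetric, B(ξ) symmetric positive semidefinite, K(ξ) skew-symmetric, and a real number f(ξ) > 0 such that [K(ξ)A(ξ)]^s + B(ξ) ≥ f(ξ) I. Assume additionally that there is a constant C₀ > 0 such that for all ξ ≠ 0: |ξ| ‖K(ξ)‖ / (1+|ξ|²) ≤ C₀ and ‖K(ξ) B(ξ)^{1/2}‖ / ((1+|ξ|²)^{1/2} f(ξ)^{1/2}) ≤ C₀, where B(ξ)^{1/2} is the positive semidefinite square root of B(ξ). Then there exist constants C ≥ 1 and k > 0, depending only on n and C₀, such that for every ξ ≠ 0 and every differentiable function V : [0,∞) → ℂⁿ satisfying V′(t) = −(i|ξ|A(ξ) + B(ξ)) V(t) for all t ≥ 0, one has |V(t)| ≤ C exp( − k |ξ|² f(ξ) t / (1+|ξ|²) ) |V(0)| for all t ≥ 0. -/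
/-!
Kawashima's compensating-function method. Along the flow `V' = -(iρA + B)V` one has
`(|V|²)' = -2|B^{1/2}V|²`, which only damps the directions seen by `B`. The correction
`c Im⟨V, KV⟩` with `c = ερ/(1+ρ²)` contributes `-2cρ⟨V, [KA]ˢV⟩`, and `[KA]ˢ + B ≥ f` turns
this into damping of all of `|V|²`; the cross terms `⟨V, (KB + BK)V⟩` are absorbed by Young's
inequality using the bound on `‖KB^{1/2}‖`. Since `c‖K‖ ≤ 1/2`, the corrected energy is
comparable to `|V|²` and decays like `exp(-ερ²ft/(1+ρ²))` by Grönwall.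
-/

open Matrix

/-- The Euclidean norm of a vector in `ℝ^d`. -/
noncomputable def euclidNorm {d : ℕ} (ξ : Fin d → ℝ) : ℝ :=
  Real.sqrt (∑ i, ξ i ^ 2)

/-- The positive semidefinite square root of a positive semidefinite matrix
(removed from Mathlib; restored with its old definition). -/
noncomputable def Matrix.PosSemidef.sqrt {n 𝕜 : Type*} [Fintype n] [DecidableEq n] [RCLike 𝕜]
    [PartialOrder 𝕜] [StarOrderedRing 𝕜] {A : Matrix n n 𝕜} (hA : A.PosSemidef) : Matrix n n 𝕜 :=
  hA.1.eigenvectorUnitary.1 * diagonal ((↑) ∘ (√·) ∘ hA.1.eigenvalues) *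
  (star hA.1.eigenvectorUnitary : Matrix n n 𝕜)

/-- The operator norm of a real square matrix, induced by the Euclidean norm. -/
noncomputable def opNormR {n : ℕ} (M : Matrix (Fin n) (Fin n) ℝ) : ℝ :=
  ‖Matrix.toEuclideanCLM (𝕜 := ℝ) (n := Fin n) M‖

/-- The symmetric part `[M]ˢ = (1/2)(M + Mᵀ)` of a real square matrix. -/
noncomputable def symPart {n : ℕ} (M : Matrix (Fin n) (Fin n) ℝ) :
    Matrix (Fin n) (Fin n) ℝ :=
  (1 / 2 : ℝ) • (M + Mᵀ)

open scoped InnerProductSpace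

section PosSemidefSqrt

variable {ι : Type*} [Fintype ι] [DecidableEq ι] {A : Matrix ι ι ℝ}

theorem Matrix.PosSemidef.posSemidef_sqrt (hA : A.PosSemidef) : hA.sqrt.PosSemidef :=
  (PosSemidef.diagonal fun i => by simp [Real.sqrt_nonneg]).mul_mul_conjTranspose_same _

theorem Matrix.PosSemidef.sqrt_mul_self (hA : A.PosSemidef) : hA.sqrt * hA.sqrt = A := by
  set U : Matrix ι ι ℝ := (hA.1.eigenvectorUnitary : Matrix ι ι ℝ)
  set D : Matrix ι ι ℝ := diagonal (RCLike.ofReal ∘ (√·) ∘ hA.1.eigenvalues)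
  have hU : star U * U = 1 := Unitary.coe_star_mul_self _
  have hD : D * D = diagonal (RCLike.ofReal ∘ hA.1.eigenvalues) := by
    rw [diagonal_mul_diagonal]
    congr 1 with i
    simp [Real.mul_self_sqrt (hA.eigenvalues_nonneg i)]
  calc hA.sqrt * hA.sqrt = U * (D * (star U * U) * D) * star U := by
        simp only [Matrix.PosSemidef.sqrt, U, D, Matrix.mul_assoc]
    _ = A := by
        have hspec := hA.1.spectral_theorem
        rw [Unitary.conjStarAlgAut_apply] at hspec
        rw [hU, Matrix.mul_one, hD, ← hspec]

end PosSemidefSqrt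

section EnergyMethod

open Complex ContinuousLinearMap Set

theorem le_mul_exp_of_hasDerivWithinAt_add_mul_nonpos {u u' : ℝ → ℝ} {θ : ℝ}
    (hu : ∀ t ∈ Ici (0 : ℝ), HasDerivWithinAt u (u' t) (Ici 0) t)
    (hdiss : ∀ t ∈ Ici (0 : ℝ), u' t + θ * u t ≤ 0) {t : ℝ} (ht : 0 ≤ t) :
    u t ≤ u 0 * Real.exp (-θ * t) := by
  have h := le_gronwallBound_of_liminf_deriv_right_le (δ := u 0) (K := -θ) (ε := 0) (b := t)
    (fun x hx => (hu x hx.1).continuousWithinAt.mono Icc_subset_Ici_self)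
    (fun x hx r hr => ((hu x hx.1).mono (Ici_subset_Ici.2 hx.1)).liminf_right_slope_le hr)
    le_rfl (fun x hx => by linarith [hdiss x hx.1]) t ⟨ht, le_rfl⟩
  rwa [gronwallBound_ε0, sub_zero] at h

/-- With `r = |v|`, `β = |B^{1/2} v|`, `s = ⟨v, [KA]ˢ v⟩` and `q = Im ⟨v, (KB + BK) v⟩`, the
left-hand side bounds `E' + θ E` for the compensated energy `E`. -/
theorem young_dissipation {ε C₀ ρ f r β N s q : ℝ} (hε : 0 < ε) (hεC₀ : ε * (1 + C₀ ^ 2) ≤ 1)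
    (hρ : 0 ≤ ρ) (hf : 0 < f) (hr : 0 ≤ r) (hβ : 0 ≤ β)
    (hN : N ≤ C₀ * (√(1 + ρ ^ 2) * √f)) (hs : f * r ^ 2 - β ^ 2 ≤ s) (hq : |q| ≤ 2 * N * β * r) :
    -2 * β ^ 2 - ε * ρ / (1 + ρ ^ 2) * (2 * ρ * s + q) +
      ε * ρ ^ 2 * f / (1 + ρ ^ 2) * (3 / 2 * r ^ 2) ≤ 0 := by
  have hden : 0 < 1 + ρ ^ 2 := by positivity
  have hσ : √(1 + ρ ^ 2) ^ 2 = 1 + ρ ^ 2 := Real.sq_sqrt hden.le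
  have hτ : √f ^ 2 = f := Real.sq_sqrt hf.le
  have hamgm : 2 * ρ * N * β * r ≤ ρ ^ 2 * f * r ^ 2 / 2 + 2 * C₀ ^ 2 * (1 + ρ ^ 2) * β ^ 2 := by
    have h := mul_le_mul_of_nonneg_left hN (by positivity : 0 ≤ 2 * ρ * β * r)
    linear_combination h + sq_nonneg (ρ * √f * r - 2 * C₀ * √(1 + ρ ^ 2) * β) / 2
      + ρ ^ 2 * r ^ 2 / 2 * hτ + 2 * C₀ ^ 2 * β ^ 2 * hσ
  have hq' : -q ≤ 2 * N * β * r := (neg_le_abs q).trans hq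
  have key : -2 * β ^ 2 * (1 + ρ ^ 2) - ε * ρ * (2 * ρ * s + q) +
      ε * ρ ^ 2 * f * (3 / 2 * r ^ 2) ≤ 0 := by
    nlinarith [mul_le_mul_of_nonneg_left hs (by positivity : 0 ≤ 2 * ε * ρ ^ 2),
      mul_le_mul_of_nonneg_left hq' (by positivity : 0 ≤ ε * ρ),
      mul_le_mul_of_nonneg_left hamgm hε.le,
      mul_le_mul_of_nonneg_right hεC₀ (by positivity : 0 ≤ 2 * (1 + ρ ^ 2) * β ^ 2)]
  have hLHS : -2 * β ^ 2 - ε * ρ / (1 + ρ ^ 2) * (2 * ρ * s + q) +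
      ε * ρ ^ 2 * f / (1 + ρ ^ 2) * (3 / 2 * r ^ 2) = (-2 * β ^ 2 * (1 + ρ ^ 2) -
      ε * ρ * (2 * ρ * s + q) + ε * ρ ^ 2 * f * (3 / 2 * r ^ 2)) / (1 + ρ ^ 2) := by
    field_simp
  rw [hLHS]
  exact div_nonpos_of_nonpos_of_nonneg key hden.le

variable {E : Type*} [NormedAddCommGroup E] [InnerProductSpace ℂ E]

theorem abs_im_inner_apply_self_le (T : E →L[ℂ] E) (v : E) : |im ⟪v, T v⟫_ℂ| ≤ ‖T‖ * ‖v‖ ^ 2 :=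
  calc |im ⟪v, T v⟫_ℂ| ≤ ‖v‖ * ‖T v‖ := (abs_im_le_norm _).trans (norm_inner_le_norm _ _)
    _ ≤ ‖v‖ * (‖T‖ * ‖v‖) := by gcongr; exact T.le_opNorm v
    _ = ‖T‖ * ‖v‖ ^ 2 := by ring

noncomputable def compensatedEnergy (K : E →L[ℂ] E) (c : ℝ) (v : E) : ℝ :=
  ‖v‖ ^ 2 + c * im ⟪v, K v⟫_ℂ

theorem abs_compensatedEnergy_sub_norm_sq_le {K : E →L[ℂ] E} {c : ℝ} (hc : |c| * ‖K‖ ≤ 1 / 2)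
    (v : E) : |compensatedEnergy K c v - ‖v‖ ^ 2| ≤ ‖v‖ ^ 2 / 2 := by
  rw [compensatedEnergy, add_sub_cancel_left, abs_mul]
  calc |c| * |im ⟪v, K v⟫_ℂ| ≤ |c| * (‖K‖ * ‖v‖ ^ 2) := by
        gcongr; exact abs_im_inner_apply_self_le K v
    _ ≤ 1 / 2 * ‖v‖ ^ 2 := by rw [← mul_assoc]; gcongr
    _ = ‖v‖ ^ 2 / 2 := by ring

variable [CompleteSpace E]

theorem re_inner_mul_self_apply {R : E →L[ℂ] E} (hR : IsSelfAdjoint R) (v : E) :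
    re ⟪v, (R * R) v⟫_ℂ = ‖R v‖ ^ 2 := by
  have h : ⟪v, R (R v)⟫_ℂ = ⟪R v, R v⟫_ℂ := (hR.isSymmetric v (R v)).symm
  rw [mul_apply_eq_comp, h]
  exact inner_self_eq_norm_sq (𝕜 := ℂ) (R v)

variable {A B K R : E →L[ℂ] E}

theorem re_inner_generator_apply (hA : IsSelfAdjoint A) (ρ : ℝ) (v : E) :
    re ⟪v, ((I * ρ) • A + B) v⟫_ℂ = re ⟪v, B v⟫_ℂ := by
  have hAv : im ⟪v, A v⟫_ℂ = 0 := hA.isSymmetric.im_inner_self_apply v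
  simp [hAv]

theorem im_inner_skew_generator_apply (hA : IsSelfAdjoint A) (hB : IsSelfAdjoint B) (ρ : ℝ)
    (v : E) :
    im (⟪v, K (-((I * ρ) • A + B) v)⟫_ℂ + ⟪-((I * ρ) • A + B) v, K v⟫_ℂ) =
      -(ρ * re ⟪v, (K * A - A * K) v⟫_ℂ + im ⟪v, (K * B + B * K) v⟫_ℂ) := by
  have hAK : ⟪A v, K v⟫_ℂ = ⟪v, A (K v)⟫_ℂ := hA.isSymmetric v (K v)
  have hBK : ⟪B v, K v⟫_ℂ = ⟪v, B (K v)⟫_ℂ := hB.isSymmetric v (K v)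
  simp only [_root_.add_apply, _root_.smul_apply, mul_apply_eq_comp,
    _root_.sub_apply, map_neg, map_add, map_smul, inner_neg_left, inner_neg_right, inner_add_left,
    inner_add_right, inner_smul_left, inner_smul_right, inner_sub_right, hAK, hBK]
  simp [mul_im, mul_re]
  ring

theorem abs_im_inner_anticommutator_le (hR : IsSelfAdjoint R)
    (hK : K ∈ skewAdjoint (E →L[ℂ] E)) (v : E) :
    |im ⟪v, (K * (R * R) + R * R * K) v⟫_ℂ| ≤ 2 * ‖K * R‖ * ‖R v‖ * ‖v‖ := by
  have hRK : R * K = -star (K * R) := by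
    rw [star_mul, hR.star_eq, skewAdjoint.mem_iff.1 hK, mul_neg, neg_neg]
  have h₁ : ⟪v, (K * (R * R)) v⟫_ℂ = ⟪star (K * R) v, R v⟫_ℂ := by
    rw [star_eq_adjoint, adjoint_inner_left]; rfl
  have h₂ : ⟪v, (R * R * K) v⟫_ℂ = ⟪R v, (R * K) v⟫_ℂ := (hR.isSymmetric v ((R * K) v)).symm
  have h₃ : ‖R * K‖ = ‖K * R‖ := by rw [hRK, norm_neg, norm_star]
  calc |im ⟪v, (K * (R * R) + R * R * K) v⟫_ℂ|
      ≤ ‖⟪star (K * R) v, R v⟫_ℂ‖ + ‖⟪R v, (R * K) v⟫_ℂ‖ := by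
        rw [_root_.add_apply, inner_add_right, h₁, h₂]
        exact (abs_im_le_norm _).trans (norm_add_le _ _)
    _ ≤ ‖star (K * R) v‖ * ‖R v‖ + ‖R v‖ * ‖(R * K) v‖ := by
        gcongr <;> exact norm_inner_le_norm _ _
    _ ≤ ‖K * R‖ * ‖v‖ * ‖R v‖ + ‖R v‖ * (‖K * R‖ * ‖v‖) := by
        gcongr
        · exact (le_opNorm _ v).trans_eq (by rw [norm_star])
        · exact h₃ ▸ le_opNorm _ v
    _ = 2 * ‖K * R‖ * ‖R v‖ * ‖v‖ := by ring

theorem HasDerivWithinAt.compensatedEnergy (hA : IsSelfAdjoint A) (hB : IsSelfAdjoint B)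
    {V : ℝ → E} {s : Set ℝ} {t : ℝ} (ρ c : ℝ)
    (hV : HasDerivWithinAt V (-((I * ρ) • A + B) (V t)) s t) :
    HasDerivWithinAt (fun t => compensatedEnergy K c (V t))
      (-2 * re ⟪V t, B (V t)⟫_ℂ - c * (ρ * re ⟪V t, (K * A - A * K) (V t)⟫_ℂ +
        im ⟪V t, (K * B + B * K) (V t)⟫_ℂ)) s t := by
  let : InnerProductSpace ℝ E := .rclikeToReal ℂ E
  have hKV : HasDerivWithinAt (fun t => K (V t)) (K (-((I * ρ) • A + B) (V t))) s t :=
    (K.restrictScalars ℝ).hasFDerivAt.comp_hasDerivWithinAt t hV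
  have him := imCLM.hasFDerivAt.comp_hasDerivWithinAt t (hV.inner ℂ hKV)
  refine (hV.norm_sq.add (him.const_mul c)).congr_deriv ?_
  rw [real_inner_eq_re_inner, inner_neg_right, map_neg, RCLike.re_to_complex,
    re_inner_generator_apply hA]
  simp only [imCLM_apply, im_inner_skew_generator_apply hA hB]
  ring

theorem compensatedEnergy_le_mul_exp (hA : IsSelfAdjoint A) (hR : IsSelfAdjoint R)
    (hK : K ∈ skewAdjoint (E →L[ℂ] E)) {ρ f C₀ ε : ℝ} (hρ : 0 ≤ ρ) (hf : 0 < f) (hε : 0 < ε)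
    (hεC₀ : ε * (1 + C₀ ^ 2) ≤ 1)
    (hcoer : ∀ v, f * ‖v‖ ^ 2 ≤ re ⟪v, (K * A - A * K) v⟫_ℂ / 2 + re ⟪v, (R * R) v⟫_ℂ)
    (hc : |ε * ρ / (1 + ρ ^ 2)| * ‖K‖ ≤ 1 / 2) (hN : ‖K * R‖ ≤ C₀ * (√(1 + ρ ^ 2) * √f))
    {V : ℝ → E}
    (hV : ∀ t ∈ Ici (0 : ℝ), HasDerivWithinAt V (-((I * ρ) • A + R * R) (V t)) (Ici 0) t)
    {t : ℝ} (ht : 0 ≤ t) :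
    compensatedEnergy K (ε * ρ / (1 + ρ ^ 2)) (V t) ≤
      compensatedEnergy K (ε * ρ / (1 + ρ ^ 2)) (V 0) *
        Real.exp (-(ε * ρ ^ 2 * f / (1 + ρ ^ 2)) * t) := by
  have hB : IsSelfAdjoint (R * R) := by
    simpa only [hR.star_eq] using IsSelfAdjoint.star_mul_self R
  refine le_mul_exp_of_hasDerivWithinAt_add_mul_nonpos
    (fun τ hτ => (hV τ hτ).compensatedEnergy (K := K) hA hB ρ _) (fun τ _ => ?_) ht
  have hyoung := young_dissipation (s := re ⟪V τ, (K * A - A * K) (V τ)⟫_ℂ / 2) hε hεC₀ hρ hf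
    (norm_nonneg (V τ)) (norm_nonneg (R (V τ))) hN
    (by rw [← re_inner_mul_self_apply hR]; linarith [hcoer (V τ)])
    (abs_im_inner_anticommutator_le hR hK (V τ))
  have hθE : ε * ρ ^ 2 * f / (1 + ρ ^ 2) * compensatedEnergy K (ε * ρ / (1 + ρ ^ 2)) (V τ) ≤
      ε * ρ ^ 2 * f / (1 + ρ ^ 2) * (3 / 2 * ‖V τ‖ ^ 2) := by
    gcongr
    linarith [(abs_le.1 (abs_compensatedEnergy_sub_norm_sq_le hc (V τ))).2]
  rw [re_inner_mul_self_apply hR]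
  linarith

theorem norm_le_two_mul_exp_of_hasDerivWithinAt_generator (hA : IsSelfAdjoint A)
    (hR : IsSelfAdjoint R) (hRB : R * R = B) (hK : K ∈ skewAdjoint (E →L[ℂ] E))
    {ρ f C₀ ε : ℝ} (hρ : 0 ≤ ρ) (hf : 0 < f) (hε : 0 < ε) (hεC₀ : ε * (1 + C₀ ^ 2) ≤ 1)
    (hεC₀' : ε * C₀ ≤ 1 / 2)
    (hcoer : ∀ v, f * ‖v‖ ^ 2 ≤ re ⟪v, (K * A - A * K) v⟫_ℂ / 2 + re ⟪v, B v⟫_ℂ)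
    (hK₁ : ρ * ‖K‖ / (1 + ρ ^ 2) ≤ C₀) (hK₂ : ‖K * R‖ / (√(1 + ρ ^ 2) * √f) ≤ C₀)
    {V : ℝ → E} (hV : ∀ t ∈ Ici (0 : ℝ), HasDerivWithinAt V (-((I * ρ) • A + B) (V t)) (Ici 0) t)
    {t : ℝ} (ht : 0 ≤ t) :
    ‖V t‖ ≤ 2 * Real.exp (-(ε / 2 * ρ ^ 2 * f * t / (1 + ρ ^ 2))) * ‖V 0‖ := by
  subst hRB
  set θ := ε * ρ ^ 2 * f / (1 + ρ ^ 2)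
  have hc : |ε * ρ / (1 + ρ ^ 2)| * ‖K‖ ≤ 1 / 2 := by
    rw [abs_of_nonneg (by positivity)]
    calc ε * ρ / (1 + ρ ^ 2) * ‖K‖ = ε * (ρ * ‖K‖ / (1 + ρ ^ 2)) := by ring
      _ ≤ ε * C₀ := by gcongr
      _ ≤ 1 / 2 := hεC₀'
  have hE s := abs_le.1 (abs_compensatedEnergy_sub_norm_sq_le hc (V s))
  have hdecay := compensatedEnergy_le_mul_exp hA hR hK hρ hf hε hεC₀ hcoer hc
    ((div_le_iff₀ (by positivity)).1 hK₂) hV ht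
  have hexp : Real.exp (-θ * t / 2) ^ 2 = Real.exp (-θ * t) := by
    rw [← Real.exp_nat_mul]; ring_nf
  have hsq : ‖V t‖ ^ 2 ≤ (2 * Real.exp (-θ * t / 2) * ‖V 0‖) ^ 2 := by
    have h0 := mul_le_mul_of_nonneg_right (hE 0).2 (Real.exp_pos (-θ * t)).le
    rw [mul_pow, mul_pow, hexp]
    nlinarith [(hE t).1]
  rw [show -(ε / 2 * ρ ^ 2 * f * t / (1 + ρ ^ 2)) = -θ * t / 2 by ring]
  exact (pow_le_pow_iff_left₀ (norm_nonneg _) (by positivity) two_ne_zero).1 hsq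

end EnergyMethod

section Complexify

variable {ι : Type*} [Fintype ι] [DecidableEq ι]

noncomputable def complexify :
    Matrix ι ι ℝ →+* (EuclideanSpace ℂ ι →L[ℂ] EuclideanSpace ℂ ι) :=
  (toEuclideanCLM (n := ι) (𝕜 := ℂ) : Matrix ι ι ℂ →+* _).comp Complex.ofRealHom.mapMatrix

theorem complexify_apply (M : Matrix ι ι ℝ) :
    complexify M = toEuclideanCLM (n := ι) (𝕜 := ℂ) (M.map (↑)) := rfl

theorem complexify_smul (r : ℝ) (M : Matrix ι ι ℝ) :
    complexify (r • M) = (r : ℂ) • complexify M := by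
  rw [complexify_apply, complexify_apply, ← map_smul]
  congr 1 with i j
  simp

theorem star_complexify (M : Matrix ι ι ℝ) : star (complexify M) = complexify Mᵀ := by
  rw [complexify_apply, complexify_apply, ← map_star]
  congr 1 with i j
  simp

theorem isSelfAdjoint_complexify {M : Matrix ι ι ℝ} (hM : M.IsSymm) :
    IsSelfAdjoint (complexify M) := by
  rw [IsSelfAdjoint, star_complexify, hM.eq]

theorem complexify_mem_skewAdjoint {M : Matrix ι ι ℝ} (hM : Mᵀ = -M) :
    complexify M ∈ skewAdjoint (EuclideanSpace ℂ ι →L[ℂ] EuclideanSpace ℂ ι) := by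
  rw [skewAdjoint.mem_iff, star_complexify, hM, map_neg]

theorem norm_complexify_le (M : Matrix ι ι ℝ) :
    ‖complexify M‖ ≤ ‖toEuclideanCLM (n := ι) (𝕜 := ℝ) M‖ := by
  set T := toEuclideanCLM (n := ι) (𝕜 := ℝ) M
  refine ContinuousLinearMap.opNorm_le_bound _ (norm_nonneg T) fun v => ?_
  let x : EuclideanSpace ℝ ι := WithLp.toLp 2 fun i => (v i).re
  let y : EuclideanSpace ℝ ι := WithLp.toLp 2 fun i => (v i).im
  have norm_sq_eq {w : EuclideanSpace ℂ ι} {a b : EuclideanSpace ℝ ι}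
      (ha : ∀ i, (w i).re = a i) (hb : ∀ i, (w i).im = b i) :
      ‖w‖ ^ 2 = ‖a‖ ^ 2 + ‖b‖ ^ 2 := by
    rw [EuclideanSpace.norm_sq_eq, EuclideanSpace.norm_sq_eq, EuclideanSpace.norm_sq_eq,
      ← Finset.sum_add_distrib]
    congr 1 with i
    rw [Complex.sq_norm, Complex.normSq_apply, Real.norm_eq_abs, Real.norm_eq_abs, sq_abs, sq_abs,
      ← ha, ← hb, sq, sq]
  have hv : ‖v‖ ^ 2 = ‖x‖ ^ 2 + ‖y‖ ^ 2 := norm_sq_eq (fun _ => rfl) (fun _ => rfl)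
  have hMv : ‖complexify M v‖ ^ 2 = ‖T x‖ ^ 2 + ‖T y‖ ^ 2 := by
    refine norm_sq_eq (fun i => ?_) (fun i => ?_) <;>
      simp [complexify_apply, T, x, y, mulVec, dotProduct, Complex.re_sum, Complex.im_sum]
  rw [← pow_le_pow_iff_left₀ (norm_nonneg _) (by positivity) two_ne_zero, hMv, mul_pow, hv,
    mul_add, ← mul_pow, ← mul_pow]
  gcongr <;> exact T.le_opNorm _

theorem re_inner_complexify_nonneg {P : Matrix ι ι ℝ} (hP : P.PosSemidef)
    (v : EuclideanSpace ℂ ι) : 0 ≤ Complex.re ⟪v, complexify P v⟫_ℂ := by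
  rw [← hP.sqrt_mul_self, map_mul, re_inner_mul_self_apply
    (isSelfAdjoint_complexify (isHermitian_iff_isSymm.1 hP.posSemidef_sqrt.1))]
  positivity

end Complexify

theorem le_re_inner_complexify_of_posSemidef {n : ℕ} {A B K : Matrix (Fin n) (Fin n) ℝ} {f : ℝ}
    (hA : A.IsSymm) (hK : Kᵀ = -K) (h : (symPart (K * A) + B - f • 1).PosSemidef)
    (v : EuclideanSpace ℂ (Fin n)) :
    f * ‖v‖ ^ 2 ≤ Complex.re ⟪v, (complexify K * complexify A - complexify A * complexify K) v⟫_ℂ / 2 +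
      Complex.re ⟪v, complexify B v⟫_ℂ := by
  have hsym : symPart (K * A) = (1 / 2 : ℝ) • (K * A - A * K) := by
    rw [symPart, transpose_mul, hA.eq, hK, Matrix.mul_neg, sub_eq_add_neg]
  have hv : Complex.re ⟪v, v⟫_ℂ = ‖v‖ ^ 2 := inner_self_eq_norm_sq (𝕜 := ℂ) v
  have h₀ := re_inner_complexify_nonneg h v
  simp only [map_sub, map_add, map_mul, hsym, complexify_smul, map_one, _root_.sub_apply,
    _root_.add_apply, _root_.smul_apply, one_apply_eq_self, inner_sub_right, inner_add_right,
    inner_smul_right, Complex.sub_re, Complex.add_re, Complex.re_ofReal_mul, hv] at h₀ ⊢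
  linarith

theorem pointwise_energy_estimate_general_general (n : ℕ)
    (C₀ : ℝ) :
    ∃ C k : ℝ, 1 ≤ C ∧ 0 < k ∧
      ∀ (d : ℕ), 1 ≤ d →
      ∀ (A B K : (Fin d → ℝ) → Matrix (Fin n) (Fin n) ℝ)
        (f : (Fin d → ℝ) → ℝ)
        (hAsymm : ∀ ξ, ξ ≠ 0 → (A ξ).IsSymm)
        (hBpsd : ∀ ξ, ξ ≠ 0 → (B ξ).PosSemidef)
        (hKskew : ∀ ξ, ξ ≠ 0 → (K ξ)ᵀ = -(K ξ))
        (hf : ∀ ξ, ξ ≠ 0 → 0 < f ξ)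
        (hpos : ∀ ξ, ξ ≠ 0 → (symPart (K ξ * A ξ) + B ξ -
          f ξ • (1 : Matrix (Fin n) (Fin n) ℝ)).PosSemidef)
        (hK1 : ∀ ξ, ξ ≠ 0 → euclidNorm ξ * opNormR (K ξ) / (1 + euclidNorm ξ ^ 2) ≤ C₀)
        (hK2 : ∀ (ξ : Fin d → ℝ) (hξ : ξ ≠ 0),
          opNormR (K ξ * ((hBpsd ξ hξ).sqrt)) /
            (Real.sqrt (1 + euclidNorm ξ ^ 2) * Real.sqrt (f ξ)) ≤ C₀)
        (ξ : Fin d → ℝ), ξ ≠ 0 →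
        ∀ V : ℝ → EuclideanSpace ℂ (Fin n),
          (∀ t ∈ Set.Ici (0 : ℝ), HasDerivWithinAt V
            ((WithLp.equiv 2 (Fin n → ℂ)).symm
              (-(((Complex.I * (euclidNorm ξ : ℂ)) • (A ξ).map Complex.ofReal +
                  (B ξ).map Complex.ofReal) *ᵥ
                  (WithLp.equiv 2 (Fin n → ℂ) (V t)))))
            (Set.Ici (0 : ℝ)) t) →
          ∀ t ∈ Set.Ici (0 : ℝ),
            ‖V t‖ ≤ C * Real.exp (-(k * euclidNorm ξ ^ 2 * f ξ * t / (1 + euclidNorm ξ ^ 2))) *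
              ‖V 0‖ := by
  set ε := 1 / (2 * (1 + C₀ ^ 2))
  have hεC₀ : ε * (1 + C₀ ^ 2) ≤ 1 := by
    rw [div_mul_eq_mul_div, div_le_one (by positivity)]; linarith [sq_nonneg C₀]
  have hεC₀' : ε * C₀ ≤ 1 / 2 := by
    rw [div_mul_eq_mul_div, div_le_div_iff₀ (by positivity) two_pos]; nlinarith [sq_nonneg (C₀ - 1)]
  refine ⟨2, ε / 2, one_le_two, by positivity, ?_⟩
  intro d _ A B K f hA hB hK hf hpos hK₁ hK₂ ξ hξ V hV t ht
  have hρ : 0 ≤ euclidNorm ξ := Real.sqrt_nonneg _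
  have hR := (hB ξ hξ).posSemidef_sqrt
  refine norm_le_two_mul_exp_of_hasDerivWithinAt_generator
    (isSelfAdjoint_complexify (hA ξ hξ)) (isSelfAdjoint_complexify (isHermitian_iff_isSymm.1 hR.1))
    (by rw [← map_mul, (hB ξ hξ).sqrt_mul_self]) (complexify_mem_skewAdjoint (hK ξ hξ)) hρ
    (hf ξ hξ) (by positivity) hεC₀ hεC₀'
    (le_re_inner_complexify_of_posSemidef (hA ξ hξ) (hK ξ hξ) (hpos ξ hξ))
    ((div_le_div_of_nonneg_right (by gcongr; exact norm_complexify_le _) (by positivity)).trans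
      (hK₁ ξ hξ))
    ((div_le_div_of_nonneg_right (by rw [← map_mul]; exact norm_complexify_le _)
      (by positivity)).trans (hK₂ ξ hξ))
    (fun τ hτ => ?_) ht
  have h := hV τ hτ
  rwa [Matrix.add_mulVec, Matrix.smul_mulVec] at h

/-- **pointwise energy estimate, general case.**  Given families
`A(ξ)` symmetric, `B(ξ)` symmetric positive semidefinite, `K(ξ)` skew-symmetric, and
`f(ξ) > 0` with `[K(ξ)A(ξ)]ˢ + B(ξ) ≥ f(ξ) I`, and uniform bounds
`|ξ|‖K(ξ)‖/(1+|ξ|²) ≤ C₀` and `‖K(ξ)B(ξ)^(1/2)‖/((1+|ξ|²)^(1/2) f(ξ)^(1/2)) ≤ C₀`,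
there exist `C ≥ 1` and `k > 0` (depending only on `n` and `C₀`) such that every solution
of `V' = -(i|ξ|A(ξ) + B(ξ))V` on `[0,∞)` satisfies
`|V(t)| ≤ C exp(-k|ξ|²f(ξ)t/(1+|ξ|²)) |V(0)|`. -/
theorem pointwise_energy_estimate_general (n : ℕ) (hn : 1 ≤ n)
    (C₀ : ℝ) (hC₀ : 0 < C₀) :
    ∃ C k : ℝ, 1 ≤ C ∧ 0 < k ∧
      ∀ (d : ℕ), 1 ≤ d →
      ∀ (A B K : (Fin d → ℝ) → Matrix (Fin n) (Fin n) ℝ)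
        (f : (Fin d → ℝ) → ℝ)
        (hAsymm : ∀ ξ, ξ ≠ 0 → (A ξ).IsSymm)
        (hBpsd : ∀ ξ, ξ ≠ 0 → (B ξ).PosSemidef)
        (hKskew : ∀ ξ, ξ ≠ 0 → (K ξ)ᵀ = -(K ξ))
        (hf : ∀ ξ, ξ ≠ 0 → 0 < f ξ)
        (hpos : ∀ ξ, ξ ≠ 0 → (symPart (K ξ * A ξ) + B ξ -
          f ξ • (1 : Matrix (Fin n) (Fin n) ℝ)).PosSemidef)
        (hK1 : ∀ ξ, ξ ≠ 0 → euclidNorm ξ * opNormR (K ξ) / (1 + euclidNorm ξ ^ 2) ≤ C₀)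
        (hK2 : ∀ (ξ : Fin d → ℝ) (hξ : ξ ≠ 0),
          opNormR (K ξ * ((hBpsd ξ hξ).sqrt)) /
            (Real.sqrt (1 + euclidNorm ξ ^ 2) * Real.sqrt (f ξ)) ≤ C₀)
        (ξ : Fin d → ℝ), ξ ≠ 0 →
        ∀ V : ℝ → EuclideanSpace ℂ (Fin n),
          (∀ t ∈ Set.Ici (0 : ℝ), HasDerivWithinAt V
            ((WithLp.equiv 2 (Fin n → ℂ)).symm
              (-(((Complex.I * (euclidNorm ξ : ℂ)) • (A ξ).map Complex.ofReal +
                  (B ξ).map Complex.ofReal) *ᵥ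
                  (WithLp.equiv 2 (Fin n → ℂ) (V t)))))
            (Set.Ici (0 : ℝ)) t) →
          ∀ t ∈ Set.Ici (0 : ℝ),
            ‖V t‖ ≤ C * Real.exp (-(k * euclidNorm ξ ^ 2 * f ξ * t / (1 + euclidNorm ξ ^ 2))) *
              ‖V 0‖ :=
  pointwise_energy_estimate_general_general n C₀
end

section
/- Let d ≥ 2 be an integer and fix constants ρ̄ > 0, p̄_ρ > 0, k̄ > 0, ᾱ > 0, ē_θ > 0, γ > 0, and ū ∈ ℝ^d. For ξ ∈ ℝ^d with ξ ≠ 0, set ω = ξ/|ξ| and β(ξ) = p̄_ρ + k̄ρ̄|ξ|², and define the (d+2)×(d+2) real block matrices Ã(ξ) = [[ū·ω, √β(ξ) ωᵀ, 0], [√β(ξ) ω, (ū·ω) I_d, γ ω], [0, γ ωᵀ, ū·ω]] and B̃(ξ) = |ξ|² diag(0, …, 0, ᾱ/(ρ̄ ē_θ)) (all entries zero except the last diagonal entry). Then for every ξ ≠ 0 there exists ψ ∈ ℝ^{d+2} with ψ ≠ 0 such that B̃(ξ)ψ = 0 and Ã(ξ)ψ = (ū·ω)ψ; indeed any ψ =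 (0, w, 0) with w ∈ ℝ^d, w ≠ 0, w·ω = 0 works. In particular, the pair (Ã(ξ), B̃(ξ)) is not genuinely coupled, so the multidimensional Euler–Fourier–Korteweg system fails the genuine coupling condition. -/
open Matrix

/-- Genuine coupling of a pair of real square matrices `(A, B)`: no eigenvector of `A`
lies in the kernel of `B`. -/
def GenuinelyCoupled {m : Type*} [Fintype m] [DecidableEq m]
    (A B : Matrix m m ℝ) : Prop :=
  ∀ (μ : ℝ) (ψ : m → ℝ), ψ ≠ 0 → B *ᵥ ψ = 0 →
    (μ • (1 : Matrix m m ℝ) + A) *ᵥ ψ ≠ 0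

/-- The index type `{density} ⊕ (velocity components) ⊕ {temperature}` for the
`(d+2) × (d+2)` symbols of the `d`-dimensional Euler–Fourier–Korteweg system. -/
abbrev EFKidx (d : ℕ) := Unit ⊕ Fin d ⊕ Unit

/-- The symmetrized generalized transport symbol `Ã(ξ)` of the `d`-dimensional
Euler–Fourier–Korteweg system, written in `1 + d + 1` block form: here `uω = ū·ω`,
`sβ = √β(ξ)`, `γ > 0` and `ω = ξ/|ξ|`. -/
def EFKtransport (d : ℕ) (uω sβ γ : ℝ) (ω : Fin d → ℝ) :
    Matrix (EFKidx d) (EFKidx d) ℝ :=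
  Matrix.of fun i j =>
    match i, j with
    | Sum.inl _, Sum.inl _ => uω
    | Sum.inl _, Sum.inr (Sum.inl l) => sβ * ω l
    | Sum.inl _, Sum.inr (Sum.inr _) => 0
    | Sum.inr (Sum.inl k), Sum.inl _ => sβ * ω k
    | Sum.inr (Sum.inl k), Sum.inr (Sum.inl l) => if k = l then uω else 0
    | Sum.inr (Sum.inl k), Sum.inr (Sum.inr _) => γ * ω k
    | Sum.inr (Sum.inr _), Sum.inl _ => 0
    | Sum.inr (Sum.inr _), Sum.inr (Sum.inl l) => γ * ω l
    | Sum.inr (Sum.inr _), Sum.inr (Sum.inr _) => uω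

/-- The symmetrized generalized viscosity symbol `B̃(ξ)` of the `d`-dimensional
Euler–Fourier–Korteweg system: all entries vanish except the last diagonal entry `b`
(which equals `|ξ|² ᾱ/(ρ̄ ē_θ)`). -/
def EFKviscosity (d : ℕ) (b : ℝ) : Matrix (EFKidx d) (EFKidx d) ℝ :=
  Matrix.of fun i j =>
    match i, j with
    | Sum.inr (Sum.inr _), Sum.inr (Sum.inr _) => b
    | _, _ => 0

lemma exists_orth (d : ℕ) (hd : 2 ≤ d) (ω : Fin d → ℝ) :
    ∃ w : Fin d → ℝ, w ≠ 0 ∧ ∑ i, w i * ω i = 0 := by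
  have hd0 : 0 < d := by omega
  set S := ∑ i, ω i ^ 2 with hS
  by_cases h0 : S = 0
  · have hωz : ∀ i, ω i = 0 := by
      intro i
      have := (Finset.sum_eq_zero_iff_of_nonneg (fun i _ => sq_nonneg (ω i))).mp h0 i
        (Finset.mem_univ i)
      exact pow_eq_zero_iff (n := 2) (by norm_num) |>.mp this
    refine ⟨Pi.single ⟨0, hd0⟩ 1, ?_, ?_⟩
    · intro h
      have := congrFun h ⟨0, hd0⟩
      simp [Pi.single_eq_same] at this
    · simp [hωz]
  · have hj : ∃ j, ω j ^ 2 ≠ S := by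
      by_contra hc
      push_neg at hc
      have : ∑ i : Fin d, ω i ^ 2 = ∑ _i : Fin d, S := Finset.sum_congr rfl (fun i _ => hc i)
      rw [Finset.sum_const, Finset.card_univ, Fintype.card_fin] at this
      rw [← hS] at this
      rw [nsmul_eq_mul] at this
      have : (d : ℝ) * S = S := this.symm
      have hd2 : (2:ℝ) ≤ (d:ℝ) := by exact_mod_cast hd
      have : ((d : ℝ) - 1) * S = 0 := by ring_nf; linarith [this]
      rcases mul_eq_zero.mp this with h | h
      · linarith
      · exact h0 h
    obtain ⟨j, hjne⟩ := hj
    refine ⟨fun i => (if i = j then S else 0) - ω j * ω i, ?_, ?_⟩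
    · intro h
      have := congrFun h j
      simp only [if_pos rfl, if_true, Pi.zero_apply] at this
      apply hjne
      rw [sq]; linarith
    · have : ∀ i, ((if i = j then S else 0) - ω j * ω i) * ω i
          = (if i = j then S * ω i else 0) - ω j * ω i ^ 2 := by
        intro i; by_cases h : i = j <;> simp [h] <;> ring
      rw [Finset.sum_congr rfl (fun i _ => this i), Finset.sum_sub_distrib,
        Finset.sum_ite_eq' Finset.univ j (fun i => S * ω i), ← Finset.mul_sum, ← hS]
      simp [mul_comm]

/-- For `d ≥ 2`, the multidimensional Euler–Fourier–Korteweg system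
fails the genuine coupling condition: for every `ξ ≠ 0` there is a nonzero
`ψ ∈ ℝ^(d+2)` with `B̃(ξ)ψ = 0` and `Ã(ξ)ψ = (ū·ω)ψ`; indeed any `ψ = (0, w, 0)` with
`w ≠ 0` and `w·ω = 0` works, and the pair `(Ã(ξ), B̃(ξ))` is not genuinely coupled. -/
theorem EFK_multiD_not_genuinely_coupled (d : ℕ) (hd : 2 ≤ d)
    (ρ pρ k α eθ γ : ℝ) (u : Fin d → ℝ)
    (hρ : 0 < ρ) (hp : 0 < pρ) (hk : 0 < k) (hα : 0 < α) (he : 0 < eθ) (hγ : 0 < γ)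
    (ξ : Fin d → ℝ) (hξ : ξ ≠ 0) :
    let nξ2 := ∑ i, ξ i ^ 2
    let ω : Fin d → ℝ := fun i => ξ i / Real.sqrt nξ2
    let β := pρ + k * ρ * nξ2
    let uω := ∑ i, u i * ω i
    let Atil := EFKtransport d uω (Real.sqrt β) γ ω
    let Btil := EFKviscosity d (nξ2 * (α / (ρ * eθ)))
    (∀ w : Fin d → ℝ, w ≠ 0 → ∑ i, w i * ω i = 0 →
      (Sum.elim (fun _ => (0 : ℝ)) (Sum.elim w fun _ => 0) : EFKidx d → ℝ) ≠ 0 ∧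
      Btil *ᵥ (Sum.elim (fun _ => (0 : ℝ)) (Sum.elim w fun _ => 0)) = 0 ∧
      Atil *ᵥ (Sum.elim (fun _ => (0 : ℝ)) (Sum.elim w fun _ => 0)) =
        uω • (Sum.elim (fun _ => (0 : ℝ)) (Sum.elim w fun _ => 0))) ∧
    (∃ ψ : EFKidx d → ℝ, ψ ≠ 0 ∧ Btil *ᵥ ψ = 0 ∧ Atil *ᵥ ψ = uω • ψ) ∧
    ¬ GenuinelyCoupled Atil Btil := by
  intro nξ2 ω β uω Atil Btil
  have key : ∀ w : Fin d → ℝ, w ≠ 0 → ∑ i, w i * ω i = 0 →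
      (Sum.elim (fun _ => (0 : ℝ)) (Sum.elim w fun _ => 0) : EFKidx d → ℝ) ≠ 0 ∧
      Btil *ᵥ (Sum.elim (fun _ => (0 : ℝ)) (Sum.elim w fun _ => 0)) = 0 ∧
      Atil *ᵥ (Sum.elim (fun _ => (0 : ℝ)) (Sum.elim w fun _ => 0)) =
        uω • (Sum.elim (fun _ => (0 : ℝ)) (Sum.elim w fun _ => 0)) := by
    intro w hw hwo
    set ψ : EFKidx d → ℝ := Sum.elim (fun _ => (0:ℝ)) (Sum.elim w fun _ => 0) with hψ
    refine ⟨?_, ?_, ?_⟩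
    · intro h
      apply hw
      funext i
      have := congrFun h (Sum.inr (Sum.inl i))
      simpa [hψ] using this
    · funext i
      rcases i with _ | i | _ <;>
        simp [hψ, Btil, EFKviscosity, Matrix.mulVec, dotProduct,
          Fintype.sum_sum_type]
    · funext i
      rcases i with _ | i | _
      · have : ∑ l, Real.sqrt β * ω l * w l = Real.sqrt β * ∑ l, w l * ω l := by
          rw [Finset.mul_sum]
          exact Finset.sum_congr rfl fun l _ => by ring
        simp [hψ, Atil, EFKtransport, Matrix.mulVec, dotProduct,
          Fintype.sum_sum_type, this, hwo]
      · simp [hψ, Atil, EFKtransport, Matrix.mulVec, dotProduct,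
          Fintype.sum_sum_type, mul_comm]
      · have : ∑ l, γ * ω l * w l = γ * ∑ l, w l * ω l := by
          rw [Finset.mul_sum]
          exact Finset.sum_congr rfl fun l _ => by ring
        simp [hψ, Atil, EFKtransport, Matrix.mulVec, dotProduct,
          Fintype.sum_sum_type, this, hwo]
  obtain ⟨w, hw, hwo⟩ := exists_orth d hd ω
  obtain ⟨h1, h2, h3⟩ := key w hw hwo
  refine ⟨key, ⟨_, h1, h2, h3⟩, ?_⟩
  intro hGC
  apply hGC (-uω) _ h1 h2
  rw [Matrix.add_mulVec, Matrix.smul_mulVec, Matrix.one_mulVec, h3]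
  simp
end
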